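/- Let X be an ordered real Banach space whose positive cone is closed, generating, and normal, and suppose the norm of X is σ-order continuous. Let Y be a real normed space. Then a linear operator T : X → Y is σ-Lebesgue if and only if it is σ-order-to-norm continuous, and T is σ-w-Lebesgue if and only if it is σ-order-to-weak continuous. -/

import Mathlib

/-!
Write `B₊(r)` for the positive part of the closed ball of radius `r`. By Baire category, the
closures of the convex symmetric sets `B₊(n) - B₊(n)` cannot all have empty interior, so one
of them contains a ball around `0`; iterating the resulting approximation (Andô's argument)
gives `M` with `x ∈ B₊(M‖x‖) - B₊(M‖x‖)` for every `x`. Hence a sequence with summable norms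
splits as `p k - q k` with `p`, `q` positive and summable; the tails `∑_{j ≥ k} p j` decrease
to `0`, so a σ-Lebesgue `S` gives `S (p k) → 0` by telescoping, and likewise for `q`. Since
every subsequence of a norm-null sequence has a further subsequence with summable norms, `S`
maps norm-null sequences to null sequences, and σ-order continuity of the norm turns
order-null sequences into norm-null ones. The weak statements are the same argument applied to
`f ∘ T`.
-/

open Filter Set Topology Bornology

universe u

/-- `x_α ↓ 0`: the net `x` is decreasing with infimum `0`. -/
def DecreasesToZero {X : Type*} [Zero X] [PartialOrder X] {ι : Type*} [Preorder ι]
    (x : ι → X) : Prop :=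
  Antitone x ∧ IsGLB (Set.range x) 0

/-- `x_α →o 0`: order convergence of the net `x` to `0`, i.e. there is a net `g_β`,
indexed by a (nonempty) directed set, decreasing with infimum `0`, such that for each `β`
there is `α_β` with `±x_α ≤ g_β` for all `α ≥ α_β`. -/
def OrderConvZero {X : Type u} [Zero X] [Neg X] [PartialOrder X] {ι : Type*} [Preorder ι]
    (x : ι → X) : Prop :=
  ∃ (β : Type u) (pβ : Preorder β), Nonempty β ∧
    IsDirected β (fun b₁ b₂ => pβ.le b₁ b₂) ∧
    ∃ g : β → X, (∀ b₁ b₂ : β, pβ.le b₁ b₂ → g b₂ ≤ g b₁) ∧ IsGLB (Set.range g) 0 ∧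
      ∀ b : β, ∃ a₀ : ι, ∀ a : ι, a₀ ≤ a → -g b ≤ x a ∧ x a ≤ g b

/-- `x_α →r 0`: relative uniform convergence of the net `x` to `0`: for some `u ≥ 0`
there is an increasing sequence `(α_n)` of indices with `±x_α ≤ (1/n)u` for all `α ≥ α_n`. -/
def RuConvZero {X : Type*} [Zero X] [Neg X] [PartialOrder X] [SMul ℝ X] {ι : Type*} [Preorder ι]
    (x : ι → X) : Prop :=
  ∃ u : X, 0 ≤ u ∧ ∃ α : ℕ → ι, Monotone α ∧
    ∀ n : ℕ, 0 < n → ∀ a : ι, α n ≤ a → -((n : ℝ)⁻¹ • u) ≤ x a ∧ x a ≤ (n : ℝ)⁻¹ • u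

/-- The positive cone of an ordered TVS is normal: the topology has a base of neighborhoods
of `0` consisting of full sets. -/
def NormalConeTVS (Y : Type*) [Zero Y] [PartialOrder Y] [TopologicalSpace Y] : Prop :=
  ∀ U ∈ nhds (0 : Y), ∃ V ∈ nhds (0 : Y), V ⊆ U ∧
    ∀ a b x : Y, a ∈ V → b ∈ V → a ≤ x → x ≤ b → x ∈ V

open Pointwise

lemma DecreasesToZero.orderConvZero {X : Type u} [AddCommGroup X] [PartialOrder X]
    [IsOrderedAddMonoid X] {x : ℕ → X} (h : DecreasesToZero x) : OrderConvZero x := by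
  obtain ⟨hanti, hglb⟩ := h
  refine ⟨ULift ℕ, inferInstance, inferInstance, inferInstance, fun b => x b.down,
    fun _ _ h => hanti h, ?_, fun b => ⟨b.down, fun a ha => ⟨?_, hanti ha⟩⟩⟩
  · exact (ULift.down_surjective.range_comp x).symm ▸ hglb
  · exact (neg_nonpos.mpr (hglb.1 ⟨b.down, rfl⟩)).trans (hglb.1 ⟨a, rfl⟩)

lemma orderClosedTopology_of_isClosed_nonneg {X : Type*} [AddCommGroup X] [TopologicalSpace X]
    [IsTopologicalAddGroup X] [PartialOrder X] [IsOrderedAddMonoid X]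
    (hclosed : IsClosed {x : X | 0 ≤ x}) : OrderClosedTopology X :=
  ⟨by simpa only [preimage_ofPred_eq, sub_nonneg] using
    hclosed.preimage (f := fun p : X × X => p.2 - p.1) (by fun_prop)⟩

lemma tsum_nat_add_eq_add_tsum_nat_add_succ {X : Type*} [AddCommGroup X] [TopologicalSpace X]
    [IsTopologicalAddGroup X] [T2Space X] {p : ℕ → X} (hs : Summable p) (k : ℕ) :
    ∑' j, p (j + k) = p k + ∑' j, p (j + (k + 1)) := by
  rw [((summable_nat_add_iff k).mpr hs).tsum_eq_zero_add]
  simp only [zero_add, add_right_comm _ 1 k, add_assoc]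

section OrderClosed

variable {X : Type*} [AddCommGroup X] [TopologicalSpace X] [IsTopologicalAddGroup X]
  [PartialOrder X] [IsOrderedAddMonoid X] [OrderClosedTopology X]

lemma decreasesToZero_tsum_nat_add {p : ℕ → X} (hp : ∀ n, 0 ≤ p n) (hs : Summable p) :
    DecreasesToZero fun k => ∑' j, p (j + k) := by
  have hanti : Antitone fun k => ∑' j, p (j + k) := antitone_nat_of_succ_le fun k => by
    rw [tsum_nat_add_eq_add_tsum_nat_add_succ hs k]
    exact le_add_of_nonneg_left (hp k)
  exact ⟨hanti, isGLB_of_tendsto_atTop hanti (tendsto_sum_nat_add p)⟩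

end OrderClosed

def IsSigmaLebesgue {X Z : Type*} [AddCommGroup X] [Module ℝ X] [PartialOrder X]
    [SeminormedAddCommGroup Z] [Module ℝ Z] (S : X →ₗ[ℝ] Z) : Prop :=
  ∀ x : ℕ → X, DecreasesToZero x → Tendsto (fun n => ‖S (x n)‖) atTop (𝓝 0)

lemma IsSigmaLebesgue.tendsto_of_nonneg_of_summable {X Z : Type*} [AddCommGroup X] [Module ℝ X]
    [TopologicalSpace X] [IsTopologicalAddGroup X] [PartialOrder X] [IsOrderedAddMonoid X]
    [OrderClosedTopology X] [SeminormedAddCommGroup Z] [Module ℝ Z] {S : X →ₗ[ℝ] Z}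
    (hS : IsSigmaLebesgue S) {p : ℕ → X} (hp : ∀ n, 0 ≤ p n) (hs : Summable p) :
    Tendsto (fun n => S (p n)) atTop (𝓝 0) := by
  have hP := tendsto_zero_iff_norm_tendsto_zero.mpr (hS _ (decreasesToZero_tsum_nat_add hp hs))
  have hSp : (fun k => S (p k)) = fun k => S (∑' j, p (j + k)) - S (∑' j, p (j + (k + 1))) :=
    funext fun k => by
      rw [← map_sub, tsum_nat_add_eq_add_tsum_nat_add_succ hs k, add_sub_cancel_right]
  rw [hSp, ← sub_zero 0]
  exact hP.sub (hP.comp (tendsto_add_atTop_nat 1))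

section NonnegBall

variable {X : Type*} [NormedAddCommGroup X] [PartialOrder X]

def nonnegBall (r : ℝ) : Set X := Ici 0 ∩ Metric.closedBall 0 r

lemma mem_nonnegBall_sub_of_approx [IsOrderedAddMonoid X] [OrderClosedTopology X]
    [CompleteSpace X] {c : ℝ} (hc : 0 ≤ c) (happrox : ∀ x : X,
      ∃ y ∈ (nonnegBall (c * ‖x‖) - nonnegBall (c * ‖x‖) : Set X), ‖x - y‖ ≤ ‖x‖ / 2)
    (x : X) : x ∈ (nonnegBall (c * ‖x‖ * 2) - nonnegBall (c * ‖x‖ * 2) : Set X) := by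
  choose y hy hxy using happrox
  choose A hA B hB hAB using hy
  simp only at hAB
  -- `u n` is what remains of `x` after `n` rounds of approximation
  set u : ℕ → X := fun n => (fun z => z - y z)^[n] x
  have hstep : ∀ n, A (u n) - B (u n) = u n - u (n + 1) := fun n => by
    simp only [u, Function.iterate_succ_apply', hAB, sub_sub_cancel]
  have hu_le : ∀ n, ‖u n‖ ≤ ‖x‖ * (1 / 2) ^ n := by
    intro n
    induction n with
    | zero => simp [u]
    | succ n ih =>
      have := hxy (u n)
      rw [← hAB, hstep, sub_sub_cancel] at this
      rw [pow_succ]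
      linarith
  have hu : Tendsto u atTop (𝓝 0) := squeeze_zero_norm hu_le (by
    simpa using (tendsto_pow_atTop_nhds_zero_of_lt_one (by norm_num : (0 : ℝ) ≤ 1 / 2)
      (by norm_num)).const_mul ‖x‖)
  have hsum : ∀ f : X → X, (∀ z, f z ∈ nonnegBall (c * ‖z‖)) →
      Summable (fun n => f (u n)) ∧ ∑' n, f (u n) ∈ nonnegBall (c * ‖x‖ * 2) := by
    intro f hf
    have hbound : ∀ n, ‖f (u n)‖ ≤ c * ‖x‖ * (1 / 2) ^ n := fun n =>
      calc ‖f (u n)‖ ≤ c * ‖u n‖ := mem_closedBall_zero_iff.mp (hf (u n)).2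
        _ ≤ c * (‖x‖ * (1 / 2) ^ n) := by gcongr; exact hu_le n
        _ = c * ‖x‖ * (1 / 2) ^ n := by ring
    exact ⟨.of_norm_bounded (summable_geometric_two.mul_left _) hbound,
      tsum_nonneg fun n => (hf (u n)).1, mem_closedBall_zero_iff.mpr
        (tsum_of_norm_bounded (hasSum_geometric_two.mul_left _) hbound)⟩
  obtain ⟨hsA, hmemA⟩ := hsum A hA
  obtain ⟨hsB, hmemB⟩ := hsum B hB
  refine ⟨_, hmemA, _, hmemB, tendsto_nhds_unique (hsA.hasSum.sub hsB.hasSum).tendsto_sum_nat ?_⟩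
  simp only [hstep, Finset.sum_range_sub']
  have h := (tendsto_const_nhds (x := x)).sub hu
  rwa [sub_zero] at h

variable [NormedSpace ℝ X] [PosSMulMono ℝ X]

lemma smul_mem_nonnegBall {t r : ℝ} {a : X} (ht : 0 ≤ t) (ha : a ∈ nonnegBall r) :
    t • a ∈ nonnegBall (t * r) := by
  refine ⟨smul_nonneg ht ha.1, ?_⟩
  rw [mem_closedBall_zero_iff, norm_smul, Real.norm_of_nonneg ht]
  exact mul_le_mul_of_nonneg_left (mem_closedBall_zero_iff.mp ha.2) ht

lemma smul_mem_nonnegBall_sub {t r : ℝ} {y : X} (ht : 0 ≤ t)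
    (hy : y ∈ (nonnegBall r - nonnegBall r : Set X)) :
    t • y ∈ (nonnegBall (t * r) - nonnegBall (t * r) : Set X) := by
  obtain ⟨a, ha, b, hb, rfl⟩ := hy
  exact ⟨t • a, smul_mem_nonnegBall ht ha, t • b, smul_mem_nonnegBall ht hb, (smul_sub t a b).symm⟩

variable [IsOrderedAddMonoid X]

lemma convex_nonnegBall (r : ℝ) : Convex ℝ (nonnegBall (X := X) r) :=
  (convex_Ici 0).inter (convex_closedBall 0 r)

variable [CompleteSpace X]

lemma exists_ball_subset_closure_nonnegBall_sub
    (hgen : ∀ x : X, ∃ a b : X, 0 ≤ a ∧ 0 ≤ b ∧ x = a - b) :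
    ∃ ρ : ℝ, 0 ≤ ρ ∧ ∃ r > 0,
      Metric.ball (0 : X) r ⊆ closure (nonnegBall ρ - nonnegBall ρ : Set X) := by
  have hcover : ⋃ n : ℕ, closure (nonnegBall n - nonnegBall (X := X) n) = univ := by
    refine eq_univ_of_forall fun x => mem_iUnion.mpr ?_
    obtain ⟨a, b, ha, hb, rfl⟩ := hgen x
    obtain ⟨n, hn⟩ := exists_nat_ge (max ‖a‖ ‖b‖)
    refine ⟨n, subset_closure ⟨a, ⟨ha, ?_⟩, b, ⟨hb, ?_⟩, rfl⟩⟩ <;>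
      rw [mem_closedBall_zero_iff] <;> linarith [le_max_left ‖a‖ ‖b‖, le_max_right ‖a‖ ‖b‖]
  obtain ⟨n, y, hy⟩ := nonempty_interior_of_iUnion_of_closed (fun _ => isClosed_closure) hcover
  set K := nonnegBall (X := X) (n : ℝ)
  have hconv : Convex ℝ (closure (K - K)) :=
    ((convex_nonnegBall _).sub (convex_nonnegBall _)).closure
  -- `K - K` is symmetric, so its closure contains `-y`, hence also the midpoint `0` of `y` and `-y`
  have hneg : -y ∈ closure (K - K) := by
    rw [← neg_sub K K, ← neg_closure, Set.mem_neg, neg_neg]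
    exact interior_subset hy
  have h0 : (0 : X) ∈ interior (closure (K - K)) := by
    simpa using hconv.combo_interior_closure_mem_interior hy (subset_closure hneg)
      (by norm_num : (0 : ℝ) < 1 / 2) (by norm_num : (0 : ℝ) ≤ 1 / 2) (by norm_num)
  obtain ⟨r, hr, hball⟩ := Metric.mem_nhds_iff.mp (mem_interior_iff_mem_nhds.mp h0)
  exact ⟨n, n.cast_nonneg, r, hr, hball⟩

lemma exists_approx_mem_nonnegBall_sub (hgen : ∀ x : X, ∃ a b : X, 0 ≤ a ∧ 0 ≤ b ∧ x = a - b) :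
    ∃ c : ℝ, 0 ≤ c ∧ ∀ x : X,
      ∃ y ∈ (nonnegBall (c * ‖x‖) - nonnegBall (c * ‖x‖) : Set X), ‖x - y‖ ≤ ‖x‖ / 2 := by
  obtain ⟨ρ, hρ, r, hr, hball⟩ := exists_ball_subset_closure_nonnegBall_sub hgen
  refine ⟨2 / r * ρ, by positivity, fun x => ?_⟩
  rcases eq_or_ne x 0 with rfl | hx
  · exact ⟨0, ⟨0, ⟨le_rfl, by simp⟩, 0, ⟨le_rfl, by simp⟩, sub_zero 0⟩, by simp⟩
  -- rescale `x` into the ball of radius `r`, approximate it there to within `r / 4`, scale back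
  set s := 2 * ‖x‖ / r with hs_def
  have hs : 0 < s := by positivity
  have hxs : s⁻¹ • x ∈ Metric.ball (0 : X) r := by
    rw [mem_ball_zero_iff, norm_smul, Real.norm_of_nonneg (inv_nonneg.mpr hs.le), hs_def]
    field_simp
    linarith [norm_pos_iff.mpr hx]
  obtain ⟨y, hy, hdist⟩ := Metric.mem_closure_iff.mp (hball hxs) (r / 4) (by positivity)
  refine ⟨s • y, ?_, ?_⟩
  · convert smul_mem_nonnegBall_sub hs.le hy using 3 <;> rw [hs_def] <;> ring
  · calc ‖x - s • y‖ = s * ‖s⁻¹ • x - y‖ := by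
          rw [← norm_smul_of_nonneg hs.le, smul_sub, smul_inv_smul₀ hs.ne']
      _ ≤ s * (r / 4) := by gcongr; rw [← dist_eq_norm]; exact hdist.le
      _ = ‖x‖ / 2 := by rw [hs_def]; field_simp; ring

theorem exists_forall_mem_nonnegBall_sub [OrderClosedTopology X]
    (hgen : ∀ x : X, ∃ a b : X, 0 ≤ a ∧ 0 ≤ b ∧ x = a - b) :
    ∃ M : ℝ, ∀ x : X, x ∈ (nonnegBall (M * ‖x‖) - nonnegBall (M * ‖x‖) : Set X) := by
  obtain ⟨c, hc, happrox⟩ := exists_approx_mem_nonnegBall_sub hgen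
  refine ⟨c * 2, fun x => ?_⟩
  simpa only [mul_right_comm] using mem_nonnegBall_sub_of_approx hc happrox x

namespace IsSigmaLebesgue

variable [OrderClosedTopology X] {Z : Type*} [SeminormedAddCommGroup Z] [Module ℝ Z]
  {S : X →ₗ[ℝ] Z}

lemma tendsto_of_summable_norm (hS : IsSigmaLebesgue S)
    (hgen : ∀ x : X, ∃ a b : X, 0 ≤ a ∧ 0 ≤ b ∧ x = a - b) {z : ℕ → X}
    (hz : Summable fun n => ‖z n‖) : Tendsto (fun n => S (z n)) atTop (𝓝 0) := by
  obtain ⟨M, hM⟩ := exists_forall_mem_nonnegBall_sub hgen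
  choose p hp q hq hpq using fun n => hM (z n)
  have hsummable : ∀ r : ℕ → X, (∀ n, r n ∈ nonnegBall (M * ‖z n‖)) → Summable r := fun r hr =>
    .of_norm_bounded (hz.mul_left M) fun n => mem_closedBall_zero_iff.mp (hr n).2
  have h := (hS.tendsto_of_nonneg_of_summable (fun n => (hp n).1) (hsummable p hp)).sub
    (hS.tendsto_of_nonneg_of_summable (fun n => (hq n).1) (hsummable q hq))
  simpa only [← map_sub, hpq, sub_zero] using h

lemma tendsto_of_tendsto_zero (hS : IsSigmaLebesgue S)
    (hgen : ∀ x : X, ∃ a b : X, 0 ≤ a ∧ 0 ≤ b ∧ x = a - b) {x : ℕ → X}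
    (hx : Tendsto x atTop (𝓝 0)) : Tendsto (fun n => S (x n)) atTop (𝓝 0) := by
  refine tendsto_of_subseq_tendsto fun ns hns => ?_
  -- pass to a further subsequence along which `‖x‖ < 2⁻ᵏ`
  have hsmall : ∀ k : ℕ, ‖(0 : X)‖ < (1 / 2 : ℝ) ^ k := fun k => by rw [norm_zero]; positivity
  obtain ⟨φ, -, hφ⟩ := extraction_forall_of_eventually fun k =>
    (hx.comp hns).norm.eventually (gt_mem_nhds (hsmall k))
  exact ⟨φ, hS.tendsto_of_summable_norm hgen
    (summable_geometric_two.of_nonneg_of_le (fun _ => norm_nonneg _) fun k => (hφ k).le)⟩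

end IsSigmaLebesgue

end NonnegBall

theorem sigmaLebesgue_iff_sigmaOrderToNormContinuous_general
    {X : Type*} [NormedAddCommGroup X] [NormedSpace ℝ X] [CompleteSpace X] [PartialOrder X]
    [CovariantClass X X (· + ·) (· ≤ ·)] [PosSMulMono ℝ X]
    {Y : Type*} [NormedAddCommGroup Y] [NormedSpace ℝ Y]
    (hclosed : IsClosed {x : X | 0 ≤ x})
    (hgen : ∀ x : X, ∃ a b : X, 0 ≤ a ∧ 0 ≤ b ∧ x = a - b)
    (hocn : ∀ x : ℕ → X, OrderConvZero x → Tendsto (fun n => ‖x n‖) atTop (𝓝 0))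
    (T : X →ₗ[ℝ] Y) :
    ((∀ x : ℕ → X, DecreasesToZero x → Tendsto (fun n => ‖T (x n)‖) atTop (𝓝 0)) ↔
      (∀ x : ℕ → X, OrderConvZero x → Tendsto (fun n => ‖T (x n)‖) atTop (𝓝 0))) ∧
    ((∀ x : ℕ → X, DecreasesToZero x →
        ∀ f : Y →L[ℝ] ℝ, Tendsto (fun n => f (T (x n))) atTop (𝓝 0)) ↔
      (∀ x : ℕ → X, OrderConvZero x →
        ∀ f : Y →L[ℝ] ℝ, Tendsto (fun n => f (T (x n))) atTop (𝓝 0))) := by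
  have : IsOrderedAddMonoid X := { add_le_add_left := fun _ _ h c => add_le_add_left h c }
  have : OrderClosedTopology X := orderClosedTopology_of_isClosed_nonneg hclosed
  have hnull : ∀ x : ℕ → X, OrderConvZero x → Tendsto x atTop (𝓝 0) := fun x hx =>
    tendsto_zero_iff_norm_tendsto_zero.mpr (hocn x hx)
  refine ⟨⟨fun H x hx => ?_, fun H x hx => H x hx.orderConvZero⟩,
    ⟨fun H x hx f => ?_, fun H x hx f => H x hx.orderConvZero f⟩⟩
  · exact tendsto_zero_iff_norm_tendsto_zero.mp
      (IsSigmaLebesgue.tendsto_of_tendsto_zero H hgen (hnull x hx))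
  · have hfT : IsSigmaLebesgue (f.toLinearMap ∘ₗ T) := fun y hy =>
      tendsto_zero_iff_norm_tendsto_zero.mp (H y hy f)
    exact hfT.tendsto_of_tendsto_zero hgen (hnull x hx)

/-- if `X` is an ordered Banach space with a closed generating normal cone
and σ-order continuous norm, and `Y` is a normed space, then a linear operator is
σ-Lebesgue iff it is σ-order-to-norm continuous, and σ-w-Lebesgue iff it is
σ-order-to-weak continuous. -/
theorem sigmaLebesgue_iff_sigmaOrderToNormContinuous
    {X : Type*} [NormedAddCommGroup X] [NormedSpace ℝ X] [CompleteSpace X] [PartialOrder X]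
    [CovariantClass X X (· + ·) (· ≤ ·)] [PosSMulMono ℝ X]
    {Y : Type*} [NormedAddCommGroup Y] [NormedSpace ℝ Y]
    (hclosed : IsClosed {x : X | 0 ≤ x})
    (hgen : ∀ x : X, ∃ a b : X, 0 ≤ a ∧ 0 ≤ b ∧ x = a - b)
    (hnormal : ∃ C : ℝ, 0 < C ∧ ∀ x y : X, 0 ≤ x → x ≤ y → ‖x‖ ≤ C * ‖y‖)
    (hocn : ∀ x : ℕ → X, OrderConvZero x → Tendsto (fun n => ‖x n‖) atTop (𝓝 0))
    (T : X →ₗ[ℝ] Y) :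
    ((∀ x : ℕ → X, DecreasesToZero x → Tendsto (fun n => ‖T (x n)‖) atTop (𝓝 0)) ↔
      (∀ x : ℕ → X, OrderConvZero x → Tendsto (fun n => ‖T (x n)‖) atTop (𝓝 0))) ∧
    ((∀ x : ℕ → X, DecreasesToZero x →
        ∀ f : Y →L[ℝ] ℝ, Tendsto (fun n => f (T (x n))) atTop (𝓝 0)) ↔
      (∀ x : ℕ → X, OrderConvZero x →
        ∀ f : Y →L[ℝ] ℝ, Tendsto (fun n => f (T (x n))) atTop (𝓝 0))) :=
  sigmaLebesgue_iff_sigmaOrderToNormContinuous_general hclosed hgen hocn T
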